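/- arXiv:1811.07221 — 5 statements merged into one kernel-verified Lean document; each statement's English description precedes it below -/
import Mathlib

section
/- For every integer k ≥ 1 with k ≡ 1 (mod 24), there exists a finite simple graph G with maximum degree at most 3 and with exactly (53/24)(k−1) vertices such that every nonempty induced subgraph H of G has at most k−1 vertices whose degree in H equals the maximum degree of H. (Equivalently, h(k,3) ≥ (53/24)(k−1) for infinitely many k.) -/
/-!
The graph is the disjoint union of `m` periods, each consisting of six fixed 8-vertex blocks of
maximum degree at most 3 and five isolated vertices, so it has `53 m` vertices, and
`k - 1 = 24 m`. Let `H` be an induced subgraph of maximum degree `d`. Since edges stay inside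
components, a maximum-degree vertex of `H` lies in a component whose part of `H` has maximum
degree exactly `d`, and is a maximum-degree vertex of that part. A finite check bounds, for each
block `b`, the number of maximum-degree vertices of an induced subgraph of maximum degree `d` by
`p_b(d)`; for every `d ≤ 3` the six values `p_b(d)`, plus the five isolated vertices when `d = 0`,
add up to exactly `24`.
-/

/-- The degree of a vertex: the number of its neighbors (graph on a finite type). -/
noncomputable def ndeg {V : Type*} (G : SimpleGraph V) (v : V) : ℕ :=
  (G.neighborSet v).ncard

/-- The maximum degree of a graph (on a finite type). -/
noncomputable def maxDeg {V : Type*} (G : SimpleGraph V) : ℕ :=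
  sSup (Set.range (ndeg G))

/-- The number of vertices of `G` whose degree equals the maximum degree of `G`. -/
noncomputable def maxRepCount {V : Type*} (G : SimpleGraph V) : ℕ :=
  {v : V | ndeg G v = maxDeg G}.ncard

open Finset

section InducedCounts

variable {V W : Type*} (G : SimpleGraph V) [DecidableRel G.Adj]

def degIn (t : Finset V) (v : V) : ℕ := #{u ∈ t | G.Adj v u}

def maxDegIn (t : Finset V) : ℕ := t.sup (degIn G t)

def maxRepIn (t : Finset V) : ℕ := #{v ∈ t | degIn G t v = maxDegIn G t}

lemma ndeg_induce (t : Finset V) (v : (t : Set V)) :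
    ndeg (G.induce (t : Set V)) v = degIn G t v := by
  rw [ndeg, ← Set.ncard_image_of_injective _ Subtype.val_injective, degIn,
    ← Set.ncard_coe_finset]
  congr 1
  ext u
  simp [and_comm]

lemma ndeg_eq_degIn [Fintype V] (v : V) : ndeg G v = degIn G univ v := by
  rw [ndeg, degIn, ← Set.ncard_coe_finset]
  congr 1
  ext u
  simp

lemma ndeg_induce_eq_comp (t : Finset V) :
    ndeg (G.induce (t : Set V)) = degIn G t ∘ Subtype.val :=
  funext (ndeg_induce G t)

lemma maxDeg_induce (t : Finset V) : maxDeg (G.induce (t : Set V)) = maxDegIn G t := by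
  rw [maxDeg, ndeg_induce_eq_comp, Set.range_comp, Subtype.range_coe, maxDegIn]
  refine le_antisymm (csSup_le' ?_) (Finset.sup_le fun v hv => ?_)
  · rintro _ ⟨v, hv, rfl⟩
    exact le_sup hv
  · exact le_csSup ((t.finite_toSet.image _).bddAbove) (Set.mem_image_of_mem _ hv)

lemma maxRepCount_induce (t : Finset V) : maxRepCount (G.induce (t : Set V)) = maxRepIn G t := by
  rw [maxRepCount, ndeg_induce_eq_comp, maxDeg_induce,
    ← Set.ncard_image_of_injective _ Subtype.val_injective, maxRepIn, ← Set.ncard_coe_finset]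
  congr 1
  ext u
  simp [and_comm]

lemma degIn_mono {s t : Finset V} (hst : s ⊆ t) (v : V) : degIn G s v ≤ degIn G t v :=
  card_le_card (filter_subset_filter _ hst)

lemma degIn_le_maxDegIn {t : Finset V} {v : V} (hv : v ∈ t) : degIn G t v ≤ maxDegIn G t :=
  le_sup hv

@[simp]
lemma degIn_singleton (v : V) : degIn G {v} v = 0 := by
  simp [degIn]

@[simp]
lemma maxDegIn_singleton (v : V) : maxDegIn G {v} = 0 := by
  simp [maxDegIn]

@[simp]
lemma maxRepIn_singleton (v : V) : maxRepIn G {v} = 1 := by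
  simp [maxRepIn, filter_singleton]

variable {G} {H : SimpleGraph W} [DecidableRel H.Adj] (f : H ↪g G)

lemma degIn_map (t : Finset W) (v : W) :
    degIn G (t.map f.toEmbedding) (f v) = degIn H t v := by
  rw [degIn, degIn, filter_map, card_map]
  congr 2
  ext u
  simp

lemma maxDegIn_map (t : Finset W) : maxDegIn G (t.map f.toEmbedding) = maxDegIn H t := by
  rw [maxDegIn, maxDegIn, sup_map]
  exact sup_congr rfl fun v _ => degIn_map f t v

lemma maxRepIn_map (t : Finset W) : maxRepIn G (t.map f.toEmbedding) = maxRepIn H t := by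
  rw [maxRepIn, maxRepIn, filter_map, card_map]
  congr 2
  ext v
  simp [degIn_map, maxDegIn_map]

lemma degIn_univ_iso [Fintype V] [Fintype W] (φ : H ≃g G) (v : W) :
    degIn G univ (φ v) = degIn H univ v := by
  rw [← degIn_map φ.toEmbedding, map_univ_of_surjective φ.surjective]
  rfl

end InducedCounts

section Fibers

variable {V ι : Type*} {G : SimpleGraph V} [DecidableRel G.Adj] [DecidableEq ι] {q : V → ι}

lemma degIn_fiber (hq : ∀ u v, G.Adj u v → q u = q v) (t : Finset V) {v : V} {i : ι}
    (hv : q v = i) :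
    degIn G {u ∈ t | q u = i} v = degIn G t v := by
  rw [degIn, degIn, filter_filter]
  exact congrArg card <| filter_congr fun u _ =>
    and_iff_right_of_imp fun h => (hq v u h).symm.trans hv

lemma maxDegIn_fiber_le (hq : ∀ u v, G.Adj u v → q u = q v) (t : Finset V) (i : ι) :
    maxDegIn G {u ∈ t | q u = i} ≤ maxDegIn G t :=
  Finset.sup_le fun v hv => by
    obtain ⟨hvt, hvi⟩ := mem_filter.mp hv
    rw [degIn_fiber hq t hvi]
    exact degIn_le_maxDegIn G hvt

lemma card_maxRep_fiber_le (hq : ∀ u v, G.Adj u v → q u = q v) {i : ι} (c : ℕ → ℕ)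
    (hc : ∀ s : Finset V, (∀ v ∈ s, q v = i) → maxRepIn G s ≤ c (maxDegIn G s))
    (t : Finset V) :
    #{v ∈ t | degIn G t v = maxDegIn G t ∧ q v = i} ≤ c (maxDegIn G t) := by
  set A := {v ∈ t | degIn G t v = maxDegIn G t ∧ q v = i}
  set tᵢ := {u ∈ t | q u = i}
  rcases A.eq_empty_or_nonempty with hA | ⟨v₀, hv₀⟩
  · simp [hA]
  have hA_sub : ∀ v ∈ A, v ∈ tᵢ ∧ degIn G tᵢ v = maxDegIn G t := fun v hv => by
    obtain ⟨hvt, hvd, hvi⟩ := by simpa [A] using hv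
    exact ⟨mem_filter.mpr ⟨hvt, hvi⟩, (degIn_fiber hq t hvi).trans hvd⟩
  -- a maximum-degree vertex of `t` in fiber `i` keeps its degree in `tᵢ`
  have hmax : maxDegIn G tᵢ = maxDegIn G t := by
    obtain ⟨hv₀t, hv₀d⟩ := hA_sub v₀ hv₀
    exact le_antisymm (maxDegIn_fiber_le hq t i) (hv₀d ▸ degIn_le_maxDegIn G hv₀t)
  calc #A ≤ maxRepIn G tᵢ := card_le_card fun v hv =>
        mem_filter.mpr ⟨(hA_sub v hv).1, (hA_sub v hv).2.trans hmax.symm⟩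
    _ ≤ c (maxDegIn G tᵢ) := hc tᵢ fun v hv => (mem_filter.mp hv).2
    _ = c (maxDegIn G t) := by rw [hmax]

lemma maxRepIn_le_sum_fiber [Fintype ι] (hq : ∀ u v, G.Adj u v → q u = q v)
    (c : ι → ℕ → ℕ)
    (hc : ∀ i (s : Finset V), (∀ v ∈ s, q v = i) → maxRepIn G s ≤ c i (maxDegIn G s))
    (t : Finset V) : maxRepIn G t ≤ ∑ i, c i (maxDegIn G t) := by
  rw [maxRepIn, card_eq_sum_card_fiberwise (f := q) (t := univ) fun _ _ => mem_univ _]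
  refine sum_le_sum fun i _ => ?_
  rw [filter_filter]
  exact card_maxRep_fiber_le hq (c i) (hc i) t

end Fibers

section DisjointUnion

variable {ι W : Type*} (H : ι → SimpleGraph W)

def disjointUnion : SimpleGraph (ι × W) where
  Adj u v := u.1 = v.1 ∧ (H u.1).Adj u.2 v.2
  symm := ⟨by
    rintro ⟨i, x⟩ ⟨j, y⟩ ⟨rfl, h⟩
    exact ⟨rfl, h.symm⟩⟩
  loopless := ⟨fun u h => (H u.1).loopless.irrefl _ h.2⟩

def disjointUnionEmbedding (i : ι) : H i ↪g disjointUnion H where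
  toFun x := (i, x)
  inj' _ _ h := (Prod.mk.inj h).2
  map_rel_iff' := ⟨And.right, And.intro rfl⟩

end DisjointUnion

/- Block 0: a 5-cycle and a triangle joined by an edge. Blocks 1-4: two triangles joined by two
edges, with a path of length two attached. Block 5: a triangle with a pendant tree, and an
isolated vertex. -/
def blockEdges : Fin 6 → Finset (Sym2 (Fin 8))
  | 0 => {s(0, 3), s(0, 5), s(0, 7), s(1, 4), s(1, 7), s(2, 5), s(2, 6), s(3, 6), s(4, 7)}
  | 5 => {s(0, 4), s(0, 6), s(0, 7), s(1, 5), s(1, 7), s(2, 6), s(5, 7)}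
  | _ => {s(0, 3), s(0, 5), s(0, 6), s(1, 4), s(1, 6), s(1, 7), s(2, 5), s(3, 6), s(3, 7),
      s(4, 7)}

def block (b : Fin 6) : SimpleGraph (Fin 8) := SimpleGraph.fromEdgeSet (blockEdges b)

instance (b : Fin 6) : DecidableRel (block b).Adj :=
  inferInstanceAs (DecidableRel (SimpleGraph.fromEdgeSet _).Adj)

-- `(blockProfile b).getD d 0` is `p_b(d)`; it is `0` for `d ≥ 4`
def blockProfile : Fin 6 → List ℕ
  | 0 => [3, 4, 5, 2]
  | 5 => [4, 4, 3, 2]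
  | _ => [3, 4, 4, 5]

lemma degIn_block_le : ∀ b x, degIn (block b) univ x ≤ 3 := by
  decide

set_option maxRecDepth 10000 in
lemma maxRepIn_block_le :
    ∀ b t, maxRepIn (block b) t ≤ (blockProfile b).getD (maxDegIn (block b) t) 0 := by
  decide

lemma sum_blockProfile_le (d : ℕ) :
    ∑ b, (blockProfile b).getD d 0 + (if d = 0 then 5 else 0) ≤ 24 := by
  match d with
  | 0 | 1 | 2 | 3 => decide
  | d + 4 => simp [blockProfile, Fin.sum_univ_succ]

section Gadget

variable (m : ℕ)

abbrev GadgetVertex : Type := (Fin m × Fin 6) × Fin 8 ⊕ Fin m × Fin 5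

lemma card_gadgetVertex : Fintype.card (GadgetVertex m) = 53 * m := by
  simp only [Fintype.card_sum, Fintype.card_prod, Fintype.card_fin]
  ring

def gadget : SimpleGraph (GadgetVertex m) :=
  disjointUnion (fun i : Fin m × Fin 6 => block i.2) ⊕g ⊥

def gadgetComponent : GadgetVertex m → (Fin m × Fin 6) ⊕ Fin m × Fin 5 :=
  Sum.map Prod.fst id

def blockEmbedding (i : Fin m × Fin 6) : block i.2 ↪g gadget m :=
  SimpleGraph.Embedding.sumInl.comp
    (disjointUnionEmbedding (fun i : Fin m × Fin 6 => block i.2) i)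

variable {m}

lemma gadgetComponent_eq_of_adj :
    ∀ u v, (gadget m).Adj u v → gadgetComponent m u = gadgetComponent m v := by
  rintro (u | u) (v | v) h <;> simp_all [gadget, disjointUnion, gadgetComponent]

lemma mem_map_blockEmbedding {i : Fin m × Fin 6} {v : GadgetVertex m}
    (hv : gadgetComponent m v = .inl i) : v ∈ univ.map (blockEmbedding m i).toEmbedding := by
  rcases v with ⟨j, x⟩ | p <;>
    simp only [gadgetComponent, Sum.map_inl, Sum.map_inr, Sum.inl.injEq, reduceCtorEq] at hv
  subst hv
  exact mem_map_of_mem _ (mem_univ x)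

lemma eq_of_gadgetComponent_eq_inr {p : Fin m × Fin 5} {v : GadgetVertex m}
    (hv : gadgetComponent m v = .inr p) : v = .inr p := by
  rcases v with _ | _ <;> simp_all [gadgetComponent]

lemma degIn_gadget_le [DecidableRel (gadget m).Adj] (v : GadgetVertex m) :
    degIn (gadget m) univ v ≤ 3 := by
  rw [← degIn_fiber gadgetComponent_eq_of_adj univ rfl]
  rcases v with ⟨i, x⟩ | p
  · calc _ ≤ degIn (gadget m) (univ.map (blockEmbedding m i).toEmbedding)
            (blockEmbedding m i x) :=
          degIn_mono _ (fun u hu => mem_map_blockEmbedding (mem_filter.mp hu).2) _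
      _ = degIn (block i.2) univ x := degIn_map _ _ _
      _ ≤ 3 := degIn_block_le _ _
  · calc _ ≤ degIn (gadget m) {.inr p} (.inr p) :=
          degIn_mono _ (fun u hu => mem_singleton.mpr
            (eq_of_gadgetComponent_eq_inr (mem_filter.mp hu).2)) _
      _ ≤ 3 := by simp

def gadgetProfile : (Fin m × Fin 6) ⊕ Fin m × Fin 5 → ℕ → ℕ :=
  Sum.elim (fun i d => (blockProfile i.2).getD d 0) (fun _ d => if d = 0 then 1 else 0)

lemma maxRepIn_le_gadgetProfile [DecidableRel (gadget m).Adj]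
    (i : (Fin m × Fin 6) ⊕ Fin m × Fin 5)
    (s : Finset (GadgetVertex m)) (hs : ∀ v ∈ s, gadgetComponent m v = i) :
    maxRepIn (gadget m) s ≤ gadgetProfile i (maxDegIn (gadget m) s) := by
  rcases i with i | p
  · obtain ⟨s, -, rfl⟩ := subset_map_iff.mp fun v hv => mem_map_blockEmbedding (hs v hv)
    rw [maxRepIn_map, maxDegIn_map]
    exact maxRepIn_block_le _ _
  · rcases subset_singleton_iff.mp fun v hv => mem_singleton.mpr
      (eq_of_gadgetComponent_eq_inr (hs v hv)) with rfl | rfl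
    · simp [maxRepIn]
    · simp [gadgetProfile]

lemma sum_gadgetProfile_le (d : ℕ) : ∑ i, gadgetProfile (m := m) i d ≤ 24 * m := by
  calc ∑ i, gadgetProfile (m := m) i d
      = m * (∑ b, (blockProfile b).getD d 0 + if d = 0 then 5 else 0) := by
        simp only [gadgetProfile, Fintype.sum_sum_type, Sum.elim_inl, Sum.elim_inr,
          Fintype.sum_prod_type, sum_const, card_univ, Fintype.card_prod, Fintype.card_fin,
          smul_eq_mul]
        split_ifs <;> ring
    _ ≤ 24 * m := by
        rw [mul_comm 24]
        exact Nat.mul_le_mul_left _ (sum_blockProfile_le d)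

lemma maxRepIn_gadget_le [DecidableRel (gadget m).Adj] (t : Finset (GadgetVertex m)) :
    maxRepIn (gadget m) t ≤ 24 * m :=
  (maxRepIn_le_sum_fiber gadgetComponent_eq_of_adj gadgetProfile maxRepIn_le_gadgetProfile
    t).trans (sum_gadgetProfile_le _)

end Gadget

theorem stmt_4_general (k : ℕ) (hk24 : k % 24 = 1) :
    ∃ (n : ℕ) (G : SimpleGraph (Fin n)),
      (∀ v, ndeg G v ≤ 3) ∧
      24 * n = 53 * (k - 1) ∧
      ∀ s : Set (Fin n), s.Nonempty → maxRepCount (G.induce s) ≤ k - 1 := by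
  classical
  obtain ⟨m, hm⟩ : ∃ m, k - 1 = 24 * m := ⟨k / 24, by omega⟩
  let e := Fintype.equivFinOfCardEq (card_gadgetVertex m)
  let φ : gadget m ≃g (gadget m).map e.toEmbedding := SimpleGraph.Iso.map e (gadget m)
  refine ⟨53 * m, (gadget m).map e.toEmbedding, fun v => ?_, by omega, fun s _ => ?_⟩
  · rw [ndeg_eq_degIn, ← φ.apply_symm_apply v, degIn_univ_iso]
    exact degIn_gadget_le _
  · obtain ⟨t, rfl⟩ := s.toFinite.exists_finset_coe
    rw [maxRepCount_induce, ← maxRepIn_map φ.symm.toEmbedding, hm]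
    exact maxRepIn_gadget_le _

/-- For every `k ≡ 1 (mod 24)` there is a graph with maximum degree at most `3` and exactly
`(53/24)(k-1)` vertices in which every nonempty induced subgraph has at most `k-1` vertices of
maximum degree, i.e. `h(k,3) ≥ (53/24)(k-1)` for infinitely many `k`. -/
theorem stmt_4 (k : ℕ) (hk : 1 ≤ k) (hk24 : k % 24 = 1) :
    ∃ (n : ℕ) (G : SimpleGraph (Fin n)),
      (∀ v, ndeg G v ≤ 3) ∧
      24 * n = 53 * (k - 1) ∧
      ∀ s : Set (Fin n), s.Nonempty → maxRepCount (G.induce s) ≤ k - 1 :=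
  stmt_4_general k hk24
end

section
/- Let k ≥ 1, let d_1, d_2 ≥ 0 and let n_1, n_2 be nonnegative integers. Suppose that for i = 1, 2, every finite simple graph with maximum degree at most d_i and more than n_i vertices has an induced subgraph H with at least k vertices whose degree in H equals the maximum degree of H. Then every finite simple graph with maximum degree at most d_1 + d_2 + 1 and more than n_1 + n_2 vertices has an induced subgraph H with at least k vertices whose degree in H equals the maximum degree of H. (Equivalently, h(k,d_1) + h(k,d_2) ≥ h(k, d_1+d_2+1).) -/
/-
By Lovász's partition theorem, a graph of maximum degree at most `d₁ + d₂ + 1` splits into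
parts `A₁, A₂` inducing subgraphs of maximum degree at most `d₁` and `d₂`: take a partition
minimising `(d₂ + 1) e(A₁) + (d₁ + 1) e(A₂)`, where `e` counts edges inside a part; a vertex of
`A₁` with more than `d₁` neighbours in `A₁` has at most `d₂` in `A₂`, so moving it to `A₂`
would lower the potential. If there are more than `n₁ + n₂` vertices, then `|A₁| > n₁` or
`|A₂| > n₂`, and an induced subgraph of `G[Aᵢ]` is an induced subgraph of `G`.
-/

open Finset

namespace SimpleGraph

section

variable {V W : Type*} {G : SimpleGraph V} {H : SimpleGraph W}

lemma ndeg_iso (f : G ≃g H) (v : V) : ndeg H (f v) = ndeg G v := by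
  rw [ndeg, ndeg, ← Nat.card_coe_set_eq, ← Nat.card_coe_set_eq]
  exact Nat.card_congr (f.mapNeighborSet v).symm

lemma maxDeg_iso (f : G ≃g H) : maxDeg H = maxDeg G := by
  have : ndeg H ∘ f = ndeg G := funext (ndeg_iso f)
  rw [maxDeg, maxDeg, ← this, f.surjective.range_comp]

lemma maxRepCount_iso (f : G ≃g H) : maxRepCount H = maxRepCount G := by
  rw [maxRepCount, maxRepCount, ← Set.ncard_image_of_injective _ f.injective]
  congr 1
  ext w
  obtain ⟨v, rfl⟩ := f.surjective w
  simp [f.injective.eq_iff, ndeg_iso, maxDeg_iso f]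

lemma exists_maxRepCount_induce_eq_induce_induce (A : Set V) (t : Set A) :
    ∃ s : Set V, maxRepCount (G.induce s) = maxRepCount ((G.induce A).induce t) :=
  ⟨_, maxRepCount_iso ((Embedding.induce A).comp (Embedding.induce t)).isoInduceRange⟩

end

section

variable {V : Type*} (G : SimpleGraph V) [DecidableRel G.Adj]

def degIn (s : Finset V) (v : V) : ℕ := #{w ∈ s | G.Adj v w}

def adjPairCount (s : Finset V) : ℕ := ∑ u ∈ s, G.degIn s u

lemma ndeg_eq_degree [Fintype V] (v : V) : ndeg G v = G.degree v := by
  rw [ndeg, ← Nat.card_coe_set_eq, Nat.card_eq_fintype_card, card_neighborSet_eq_degree]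

variable {G}

lemma ndeg_induce (s : Finset V) (v : (s : Set V)) : ndeg (G.induce s) v = G.degIn s v := by
  rw [ndeg, ← Set.ncard_image_of_injective _ Subtype.val_injective, degIn,
    ← Set.ncard_coe_finset]
  congr 1
  ext w
  simp [and_comm]

lemma degIn_add_degIn_compl [Fintype V] [DecidableEq V] (s : Finset V) (v : V) :
    G.degIn s v + G.degIn sᶜ v = G.degree v := by
  simp only [degIn, card_filter, sum_add_sum_compl, ← card_neighborFinset_eq_degree,
    neighborFinset_eq_filter]

lemma sum_adj_eq_degIn (s : Finset V) (v : V) :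
    ∑ u ∈ s, (if G.Adj u v then 1 else 0) = G.degIn s v := by
  simp only [degIn, card_filter, G.adj_comm]

lemma degIn_insert_self [DecidableEq V] (s : Finset V) (v : V) :
    G.degIn (insert v s) v = G.degIn s v := by
  simp [degIn, filter_insert]

lemma degIn_insert [DecidableEq V] {s : Finset V} {v : V} (hv : v ∉ s) (u : V) :
    G.degIn (insert v s) u = G.degIn s u + if G.Adj u v then 1 else 0 := by
  rw [degIn, degIn, filter_insert]
  split_ifs <;> simp [card_insert_of_notMem, hv]

lemma adjPairCount_insert [DecidableEq V] {s : Finset V} {v : V} (hv : v ∉ s) :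
    G.adjPairCount (insert v s) = G.adjPairCount s + 2 * G.degIn s v := by
  rw [adjPairCount, sum_insert hv, degIn_insert_self, sum_congr rfl fun u _ => degIn_insert hv u,
    sum_add_distrib, sum_adj_eq_degIn, adjPairCount]
  ring

variable [Fintype V] [DecidableEq V]

variable (G) in
def lovaszPotential (d₁ d₂ : ℕ) (s : Finset V) : ℕ :=
  (d₂ + 1) * G.adjPairCount s + (d₁ + 1) * G.adjPairCount sᶜ

lemma degIn_le_of_forall_lovaszPotential_le {d₁ d₂ : ℕ} (hdeg : ∀ v, G.degree v ≤ d₁ + d₂ + 1)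
    {s : Finset V} (hs : ∀ t, G.lovaszPotential d₁ d₂ s ≤ G.lovaszPotential d₁ d₂ t) :
    ∀ v ∈ s, G.degIn s v ≤ d₁ := by
  intro v hv
  obtain ⟨t, hvt, rfl⟩ : ∃ t, v ∉ t ∧ s = insert v t :=
    ⟨s.erase v, notMem_erase v s, (insert_erase hv).symm⟩
  have hcompl : tᶜ = insert v (insert v t)ᶜ := by
    rw [compl_insert, insert_erase (mem_compl.2 hvt)]
  have hmove : (d₂ + 1) * G.degIn t v ≤ (d₁ + 1) * G.degIn (insert v t)ᶜ v := by
    have := hs t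
    rw [lovaszPotential, lovaszPotential, hcompl, adjPairCount_insert hvt,
      adjPairCount_insert (by simp)] at this
    nlinarith
  have hsplit := degIn_add_degIn_compl (G := G) (insert v t) v
  rw [degIn_insert_self] at hsplit ⊢
  by_contra! h
  nlinarith [hdeg v]

variable (G) in
theorem exists_degIn_le_of_degree_le {d₁ d₂ : ℕ} (hdeg : ∀ v, G.degree v ≤ d₁ + d₂ + 1) :
    ∃ s : Finset V, (∀ v ∈ s, G.degIn s v ≤ d₁) ∧ ∀ v ∈ sᶜ, G.degIn sᶜ v ≤ d₂ := by
  obtain ⟨s, -, hmin⟩ := exists_min_image univ (G.lovaszPotential d₁ d₂) univ_nonempty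
  -- `sᶜ` minimises the potential with `d₁` and `d₂` exchanged.
  have hswap : ∀ t, G.lovaszPotential d₂ d₁ t = G.lovaszPotential d₁ d₂ tᶜ := fun t => by
    rw [lovaszPotential, lovaszPotential, compl_compl, add_comm]
  refine ⟨s, degIn_le_of_forall_lovaszPotential_le hdeg fun t => hmin t (mem_univ t),
    degIn_le_of_forall_lovaszPotential_le (d₁ := d₂) (d₂ := d₁)
      (fun v => by have := hdeg v; omega) fun t => ?_⟩
  rw [hswap, hswap, compl_compl]
  exact hmin _ (mem_univ _)

end

lemma exists_le_maxRepCount_of_degIn_le {k d n : ℕ}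
    (h : ∀ (W : Type) [Finite W] (H : SimpleGraph W), (∀ w, ndeg H w ≤ d) →
      n < Nat.card W → ∃ t : Set W, k ≤ maxRepCount (H.induce t))
    {V : Type} (G : SimpleGraph V) [DecidableRel G.Adj] (s : Finset V)
    (hs : ∀ v ∈ s, G.degIn s v ≤ d) (hn : n < #s) :
    ∃ u : Set V, k ≤ maxRepCount (G.induce u) := by
  obtain ⟨t, ht⟩ := h (s : Set V) (G.induce s) (fun v => (ndeg_induce s v).trans_le (hs v v.2))
    (by rwa [Nat.card_coe_set_eq, Set.ncard_coe_finset])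
  obtain ⟨u, hu⟩ := exists_maxRepCount_induce_eq_induce_induce (s : Set V) t
  exact ⟨u, hu ▸ ht⟩

end SimpleGraph

theorem stmt_8_general (k d₁ d₂ n₁ n₂ : ℕ)
    (h₁ : ∀ (V : Type) [Finite V] (G : SimpleGraph V), (∀ v, ndeg G v ≤ d₁) →
      n₁ < Nat.card V → ∃ s : Set V, k ≤ maxRepCount (G.induce s))
    (h₂ : ∀ (V : Type) [Finite V] (G : SimpleGraph V), (∀ v, ndeg G v ≤ d₂) →
      n₂ < Nat.card V → ∃ s : Set V, k ≤ maxRepCount (G.induce s)) :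
    ∀ (V : Type) [Finite V] (G : SimpleGraph V), (∀ v, ndeg G v ≤ d₁ + d₂ + 1) →
      n₁ + n₂ < Nat.card V → ∃ s : Set V, k ≤ maxRepCount (G.induce s) := by
  intro V _ G hdeg hcard
  classical
  cases nonempty_fintype V
  obtain ⟨s, hs, hsc⟩ := G.exists_degIn_le_of_degree_le fun v => G.ndeg_eq_degree v ▸ hdeg v
  have hsplit : n₁ < #s ∨ n₂ < #sᶜ := by
    have := card_add_card_compl s
    rw [Nat.card_eq_fintype_card] at hcard
    omega
  rcases hsplit with h | h
  · exact SimpleGraph.exists_le_maxRepCount_of_degIn_le h₁ G s hs h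
  · exact SimpleGraph.exists_le_maxRepCount_of_degIn_le h₂ G sᶜ hsc h

/-- Subadditivity for `h`: `h(k, d₁) + h(k, d₂) ≥ h(k, d₁ + d₂ + 1)`. -/
theorem stmt_8 (k d₁ d₂ n₁ n₂ : ℕ) (hk : 1 ≤ k)
    (h₁ : ∀ (V : Type) [Finite V] (G : SimpleGraph V), (∀ v, ndeg G v ≤ d₁) →
      n₁ < Nat.card V → ∃ s : Set V, k ≤ maxRepCount (G.induce s))
    (h₂ : ∀ (V : Type) [Finite V] (G : SimpleGraph V), (∀ v, ndeg G v ≤ d₂) →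
      n₂ < Nat.card V → ∃ s : Set V, k ≤ maxRepCount (G.induce s)) :
    ∀ (V : Type) [Finite V] (G : SimpleGraph V), (∀ v, ndeg G v ≤ d₁ + d₂ + 1) →
      n₁ + n₂ < Nat.card V → ∃ s : Set V, k ≤ maxRepCount (G.induce s) :=
  stmt_8_general k d₁ d₂ n₁ n₂ h₁ h₂
end

section
/- Let k ≥ 1, let d_1, d_2 ≥ 0 and let n_1, n_2 be nonnegative integers. Suppose that for i = 1, 2, every finite simple graph with maximum degree at most d_i and more than n_i vertices has an induced subgraph that is regular and has at least k vertices. Then every finite simple graph with maximum degree at most d_1 + d_2 + 1 and more than n_1 + n_2 vertices has an induced subgraph that is regular and has at least k vertices. (Equivalently, f(k,d_1) + f(k,d_2) ≥ f(k, d_1+d_2+1).) -/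
/-- A graph is regular if all its vertices have the same degree. -/
def IsRegularGraph {V : Type*} (G : SimpleGraph V) : Prop :=
  ∃ r : ℕ, ∀ v, ndeg G v = r

set_option linter.unusedSectionVars false

section aux
variable {V : Type} [Fintype V] [DecidableEq V] (G : SimpleGraph V) [DecidableRel G.Adj]

def fdeg (A : Finset V) (v : V) : ℕ := (A.filter (G.Adj v)).card

def esum (A : Finset V) : ℕ := ∑ v ∈ A, fdeg G A v

def phi (d₁ d₂ : ℕ) (A : Finset V) : ℕ := (d₂+1) * esum G A + (d₁+1) * esum G Aᶜ

lemma fdeg_insert_self (A : Finset V) (v : V) : fdeg G (insert v A) v = fdeg G A v := by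
  unfold fdeg
  rw [Finset.filter_insert]
  simp [G.irrefl]

lemma esum_erase (A : Finset V) (v : V) (hv : v ∈ A) :
    esum G A = esum G (A.erase v) + 2 * fdeg G A v := by
  have hA : A = insert v (A.erase v) := (Finset.insert_erase hv).symm
  have hv' : v ∉ A.erase v := Finset.notMem_erase v A
  have h1 : ∀ w ∈ A.erase v, fdeg G A w = fdeg G (A.erase v) w + if G.Adj w v then 1 else 0 := by
    intro w hw
    unfold fdeg
    conv_lhs => rw [hA]
    rw [Finset.filter_insert]
    split_ifs with h
    · rw [Finset.card_insert_of_notMem (by simp)]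
    · simp
  have h2 : ∑ w ∈ A.erase v, (if G.Adj w v then 1 else 0) = fdeg G A v := by
    rw [Finset.sum_boole]
    norm_num
    congr 1
    ext w
    simp only [Finset.mem_filter, Finset.mem_erase, fdeg]
    constructor
    · rintro ⟨⟨_, hw⟩, h⟩; exact ⟨hw, h.symm⟩
    · rintro ⟨hw, h⟩; exact ⟨⟨h.ne', hw⟩, h.symm⟩
  have h3 : fdeg G A v = fdeg G (A.erase v) v := by
    unfold fdeg
    congr 1
    rw [Finset.filter_erase, Finset.erase_eq_of_notMem (by simp [G.irrefl])]
  calc esum G A = fdeg G A v + ∑ w ∈ A.erase v, fdeg G A w := by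
        rw [esum]; conv_lhs => rw [hA]
        rw [Finset.sum_insert hv']
        rw [← hA]
      _ = fdeg G A v + (∑ w ∈ A.erase v, fdeg G (A.erase v) w
            + ∑ w ∈ A.erase v, (if G.Adj w v then 1 else 0)) := by
        rw [← Finset.sum_add_distrib]
        rw [Finset.sum_congr rfl h1]
      _ = esum G (A.erase v) + 2 * fdeg G A v := by
        rw [h2, esum]; ring

lemma fdeg_add_compl (A : Finset V) (v : V) :
    fdeg G A v + fdeg G Aᶜ v = ndeg G v := by
  have h : ndeg G v = (Finset.univ.filter (G.Adj v)).card := by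
    rw [ndeg, Set.ncard_eq_toFinset_card']
    congr 1
    ext w; simp
  rw [h, fdeg, fdeg, ← Finset.card_union_of_disjoint, ← Finset.filter_union,
    Finset.union_compl]
  exact Finset.disjoint_filter_filter disjoint_compl_right

end aux

section aux2
variable {V : Type} [Fintype V] [DecidableEq V] (G : SimpleGraph V) [DecidableRel G.Adj]

lemma phi_compl (d₁ d₂ : ℕ) (A : Finset V) : phi G d₁ d₂ Aᶜ = phi G d₂ d₁ A := by
  simp only [phi, compl_compl]
  ring

lemma min_deg_bound {d₁ d₂ : ℕ} (hG : ∀ v, ndeg G v ≤ d₁ + d₂ + 1)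
    (A : Finset V) (hmin : ∀ B : Finset V, phi G d₁ d₂ A ≤ phi G d₁ d₂ B)
    {v : V} (hv : v ∈ A) : fdeg G A v ≤ d₁ := by
  set a := fdeg G A v with ha
  set b := fdeg G Aᶜ v with hb
  have hvc : v ∉ Aᶜ := by simp [hv]
  have hab : a + b ≤ d₁ + d₂ + 1 := by rw [ha, hb, fdeg_add_compl]; exact hG v
  -- compare with B = A.erase v
  have e1 : esum G A = esum G (A.erase v) + 2 * a := esum_erase G A v hv
  have e2 : esum G ((A.erase v)ᶜ) = esum G Aᶜ + 2 * b := by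
    have hc : (A.erase v)ᶜ = insert v Aᶜ := by
      ext w; by_cases hw : w = v <;> simp [hw, hv]
    rw [hc, esum_erase G (insert v Aᶜ) v (Finset.mem_insert_self v Aᶜ),
      Finset.erase_insert hvc, fdeg_insert_self]
  have hle : phi G d₁ d₂ A ≤ phi G d₁ d₂ (A.erase v) := hmin _
  have key : (d₂+1) * a ≤ (d₁+1) * b := by
    simp only [phi, e1, e2] at hle
    nlinarith
  by_contra hcon
  push_neg at hcon
  have hb2 : b ≤ d₂ := by omega
  nlinarith

end aux2

lemma ndeg_iso {V W : Type*} {G : SimpleGraph V} {H : SimpleGraph W} (e : G ≃g H) (v : V) :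
    ndeg H (e v) = ndeg G v := by
  rw [ndeg, ndeg, ← Nat.card_coe_set_eq, ← Nat.card_coe_set_eq]
  exact (Nat.card_congr (e.mapNeighborSet v)).symm

lemma isRegular_of_iso {V W : Type*} {G : SimpleGraph V} {H : SimpleGraph W} (e : G ≃g H)
    (h : IsRegularGraph G) : IsRegularGraph H := by
  obtain ⟨r, hr⟩ := h
  refine ⟨r, fun w => ?_⟩
  have := ndeg_iso e (e.symm w)
  simpa [hr] using this

noncomputable def induceInduceIso {V : Type*} (G : SimpleGraph V) (A : Set V) (s : Set ↥A) :
    ((G.induce A).induce s) ≃g (G.induce (Subtype.val '' s)) where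
  toEquiv := Equiv.Set.image Subtype.val s Subtype.val_injective
  map_rel_iff' := by intro a b; simp [Equiv.Set.image, Equiv.Set.imageOfInjOn]

lemma ndeg_induce_s10 {V : Type} [Fintype V] [DecidableEq V] (G : SimpleGraph V)
    [DecidableRel G.Adj] (A : Finset V) (w : ↥(↑A : Set V)) :
    ndeg (G.induce (↑A : Set V)) w = fdeg G A w.1 := by
  rw [ndeg]
  have h1 : (G.induce (↑A : Set V)).neighborSet w
      = Subtype.val ⁻¹' {u : V | G.Adj w.1 u} := by
    ext u; simp [SimpleGraph.neighborSet]
  rw [h1, ← Set.ncard_image_of_injective _ Subtype.val_injective]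
  have h2 : Subtype.val '' (Subtype.val ⁻¹' {u : V | G.Adj w.1 u} : Set ↥(↑A : Set V))
      = ↑(A.filter (G.Adj w.1)) := by
    rw [Set.image_preimage_eq_inter_range]
    ext u; simp [and_comm]
  rw [h2, Set.ncard_coe_finset, fdeg]


/-- Subadditivity for `f`: `f(k, d₁) + f(k, d₂) ≥ f(k, d₁ + d₂ + 1)`. -/
theorem stmt_10 (k d₁ d₂ n₁ n₂ : ℕ) (hk : 1 ≤ k)
    (h₁ : ∀ (V : Type) [Finite V] (G : SimpleGraph V), (∀ v, ndeg G v ≤ d₁) →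
      n₁ < Nat.card V → ∃ s : Set V, k ≤ s.ncard ∧ IsRegularGraph (G.induce s))
    (h₂ : ∀ (V : Type) [Finite V] (G : SimpleGraph V), (∀ v, ndeg G v ≤ d₂) →
      n₂ < Nat.card V → ∃ s : Set V, k ≤ s.ncard ∧ IsRegularGraph (G.induce s)) :
    ∀ (V : Type) [Finite V] (G : SimpleGraph V), (∀ v, ndeg G v ≤ d₁ + d₂ + 1) →
      n₁ + n₂ < Nat.card V → ∃ s : Set V, k ≤ s.ncard ∧ IsRegularGraph (G.induce s) := by
  intro V _ G hdeg hcard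
  classical
  have : Fintype V := Fintype.ofFinite V
  obtain ⟨A, -, hmin⟩ := Finset.exists_min_image Finset.univ (phi G d₁ d₂)
    ⟨∅, Finset.mem_univ ∅⟩
  have hmin' : ∀ B : Finset V, phi G d₁ d₂ A ≤ phi G d₁ d₂ B :=
    fun B => hmin B (Finset.mem_univ B)
  have hminc : ∀ B : Finset V, phi G d₂ d₁ Aᶜ ≤ phi G d₂ d₁ B := by
    intro B
    rw [phi_compl]
    calc phi G d₁ d₂ A ≤ phi G d₁ d₂ Bᶜ := hmin' Bᶜ
      _ = phi G d₂ d₁ B := phi_compl G d₁ d₂ B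
  have hA1 : ∀ v ∈ A, fdeg G A v ≤ d₁ := fun v hv => min_deg_bound G hdeg A hmin' hv
  have hA2 : ∀ v ∈ Aᶜ, fdeg G Aᶜ v ≤ d₂ := fun v hv =>
    min_deg_bound G (d₁ := d₂) (d₂ := d₁) (by intro v; have := hdeg v; omega) Aᶜ hminc hv
  have hcards : A.card + Aᶜ.card = Nat.card V := by
    rw [Finset.card_add_card_compl, Nat.card_eq_fintype_card]
  have hsplit : n₁ < A.card ∨ n₂ < Aᶜ.card := by omega
  -- common machinery for a side
  have side : ∀ (d n : ℕ) (B : Finset V), (∀ v ∈ B, fdeg G B v ≤ d) → n < B.card →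
      (∀ (W : Type) [Finite W] (H : SimpleGraph W), (∀ v, ndeg H v ≤ d) →
        n < Nat.card W → ∃ s : Set W, k ≤ s.ncard ∧ IsRegularGraph (H.induce s)) →
      ∃ s : Set V, k ≤ s.ncard ∧ IsRegularGraph (G.induce s) := by
    intro d n B hB hn h
    have hcardB : n < Nat.card ↥(↑B : Set V) := by
      rwa [Nat.card_coe_set_eq, Set.ncard_coe_finset]
    have hdB : ∀ w : ↥(↑B : Set V), ndeg (G.induce (↑B : Set V)) w ≤ d := by
      intro w
      rw [ndeg_induce_s10]
      exact hB w.1 (by exact_mod_cast w.2)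
    obtain ⟨s, hs, hreg⟩ := h ↥(↑B : Set V) (G.induce (↑B : Set V)) hdB hcardB
    refine ⟨Subtype.val '' s, ?_, ?_⟩
    · rwa [Set.ncard_image_of_injective _ Subtype.val_injective]
    · exact isRegular_of_iso (induceInduceIso G (↑B : Set V) s) hreg
  rcases hsplit with h | h
  · exact side d₁ n₁ A hA1 h h₁
  · exact side d₂ n₂ Aᶜ hA2 h h₂
end

section
/- For every integer k ≥ 1, every finite simple graph with maximum degree at most 2 and with more than 11(k−1)/5 vertices (i.e., with n vertices where 5n > 11(k−1)) has an induced subgraph that is regular and has at least k vertices. (Equivalently, f(k,2) ≤ 11(k−1)/5.) -/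
/-!
A graph of maximum degree 2 is a disjoint union of paths and cycles. Every vertex set `A` of it
contains an independent set `S₀`, an induced matching `S₁` and an induced 2-regular set `S₂` with
`5|A| ≤ 8|S₀| + 2|S₁| + |S₂|`; as `8 + 2 + 1 = 11`, one of them has at least `k` vertices once
`5|V| > 11(k - 1)`.

The inequality is proved by induction on `A`, splitting off a piece `D` together with sets
`T₀, T₁, T₂ ⊆ D` whose neighbourhoods stay inside `D`. At an end `v - u - x` of a path, `D` is the
whole path if it has at most two vertices, and otherwise `v, u, x` and the next vertex, with
`T₀ = {v, x}` and `T₁ = {v, u}`. A triangle is split off whole. If every vertex of `A` has two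
neighbours in `A` and `v` lies on no triangle, one takes `S₂ = A` and `S₀, S₁` from `A \ {v}`:
the 2-regular set found there is closed under adjacency, so it misses the four vertices within
distance two of `v`.
-/

namespace Set

variable {α : Type*} [Finite α] {s : Set α} {a b : α}

theorem subset_pair_of_ncard_le_two (hs : s.ncard ≤ 2) (ha : a ∈ s) (hb : b ∈ s) (hab : a ≠ b) :
    s ⊆ {a, b} :=
  (eq_of_subset_of_ncard_le (pair_subset ha hb) (by rwa [ncard_pair hab])).ge

theorem exists_subset_pair_of_ncard_le_two (hs : s.ncard ≤ 2) (ha : a ∈ s) :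
    ∃ b ∈ s, s ⊆ {a, b} := by
  by_cases h : s ⊆ {a}
  · exact ⟨a, ha, by simpa using h⟩
  · obtain ⟨b, hb, hba⟩ := not_subset.mp h
    exact ⟨b, hb, subset_pair_of_ncard_le_two hs ha hb (Ne.symm hba)⟩

end Set

namespace SimpleGraph

variable {V : Type*} {G : SimpleGraph V}

variable (G) in
def IsRegularOn (S : Set V) (r : ℕ) : Prop :=
  ∀ x ∈ S, (G.neighborSet x ∩ S).ncard = r

theorem isRegularOn_empty (r : ℕ) : G.IsRegularOn ∅ r := fun _ h => h.elim

theorem isRegularOn_singleton (v : V) : G.IsRegularOn {v} 0 := by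
  rintro x rfl
  simp

theorem isRegularOn_pair_of_not_adj {a b : V} (h : ¬G.Adj a b) : G.IsRegularOn {a, b} 0 := by
  rintro x (rfl | rfl) <;> rw [Set.ncard_eq_zero] <;> ext z <;>
    simp only [Set.mem_inter_iff, mem_neighborSet, Set.mem_insert_iff, Set.mem_singleton_iff,
      Set.mem_empty_iff_false, iff_false] <;> grind [SimpleGraph.irrefl, SimpleGraph.adj_symm]

theorem isRegularOn_pair_of_adj {a b : V} (h : G.Adj a b) : G.IsRegularOn {a, b} 1 := by
  rintro x (rfl | rfl) <;> rw [Set.ncard_eq_one] <;> [refine ⟨b, ?_⟩; refine ⟨a, ?_⟩] <;> ext z <;>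
    simp only [Set.mem_inter_iff, mem_neighborSet, Set.mem_insert_iff, Set.mem_singleton_iff] <;>
    grind [SimpleGraph.irrefl, SimpleGraph.adj_symm]

theorem isRegularOn_triangle {a b c : V} (hab : G.Adj a b) (hbc : G.Adj b c) (hca : G.Adj c a) :
    G.IsRegularOn {a, b, c} 2 := by
  rintro x (rfl | rfl | rfl) <;> rw [Set.ncard_eq_two] <;>
    [refine ⟨b, c, hbc.ne, ?_⟩; refine ⟨a, c, hca.ne', ?_⟩; refine ⟨a, b, hab.ne, ?_⟩] <;> ext z <;>
    simp only [Set.mem_inter_iff, mem_neighborSet, Set.mem_insert_iff, Set.mem_singleton_iff] <;>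
    grind [SimpleGraph.irrefl, SimpleGraph.adj_symm]

theorem IsRegularOn.union {r : ℕ} {S T : Set V} (hS : G.IsRegularOn S r) (hT : G.IsRegularOn T r)
    (hST : ∀ x ∈ S, ∀ y ∈ T, ¬G.Adj x y) : G.IsRegularOn (S ∪ T) r := by
  rintro x (hx | hx)
  · rw [← hS x hx]
    congr 1
    ext z
    simp only [Set.mem_inter_iff, mem_neighborSet, Set.mem_union]
    grind
  · rw [← hT x hx]
    congr 1
    ext z
    simp only [Set.mem_inter_iff, mem_neighborSet, Set.mem_union]
    grind [SimpleGraph.adj_symm]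

theorem IsRegularOn.neighborSet_subset [Finite V] {S : Set V} {x : V} (hS : G.IsRegularOn S 2)
    (hx : x ∈ S) (hdeg : (G.neighborSet x).ncard ≤ 2) : G.neighborSet x ⊆ S :=
  Set.inter_eq_left.mp <|
    Set.eq_of_subset_of_ncard_le Set.inter_subset_left (by rw [hS x hx]; exact hdeg)

theorem ncard_neighborSet_induce (S : Set V) (v : S) :
    ((G.induce S).neighborSet v).ncard = (G.neighborSet v ∩ S).ncard := by
  rw [← Set.ncard_image_of_injective _ Subtype.val_injective, Set.inter_comm,
    ← Subtype.image_preimage_coe]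
  rfl

theorem IsRegularOn.isRegularGraph_induce {S : Set V} {r : ℕ} (hS : G.IsRegularOn S r) :
    IsRegularGraph (G.induce S) :=
  ⟨r, fun v => (ncard_neighborSet_induce S v).trans (hS v v.2)⟩

variable (G) in
def RegularSetsBound (A : Set V) : Prop :=
  ∃ S₀ ⊆ A, ∃ S₁ ⊆ A, ∃ S₂ ⊆ A, G.IsRegularOn S₀ 0 ∧ G.IsRegularOn S₁ 1 ∧ G.IsRegularOn S₂ 2 ∧
    5 * A.ncard ≤ 8 * S₀.ncard + 2 * S₁.ncard + S₂.ncard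

theorem regularSetsBound_empty : G.RegularSetsBound ∅ :=
  ⟨∅, le_rfl, ∅, le_rfl, ∅, le_rfl, isRegularOn_empty 0, isRegularOn_empty 1,
    isRegularOn_empty 2, by simp⟩

section Finite

variable [Finite V]

theorem RegularSetsBound.of_sdiff {A D T₀ T₁ T₂ : Set V} (hDA : D ⊆ A) (hTD : T₀ ∪ T₁ ∪ T₂ ⊆ D)
    (hclosed : ∀ x ∈ T₀ ∪ T₁ ∪ T₂, G.neighborSet x ∩ A ⊆ D)
    (h₀ : G.IsRegularOn T₀ 0) (h₁ : G.IsRegularOn T₁ 1) (h₂ : G.IsRegularOn T₂ 2)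
    (hcount : 5 * D.ncard ≤ 8 * T₀.ncard + 2 * T₁.ncard + T₂.ncard)
    (hrest : G.RegularSetsBound (A \ D)) : G.RegularSetsBound A := by
  obtain ⟨S₀, hS₀, S₁, hS₁, S₂, hS₂, g₀, g₁, g₂, hS⟩ := hrest
  have extend : ∀ {r : ℕ} {T S : Set V}, T ⊆ T₀ ∪ T₁ ∪ T₂ → S ⊆ A \ D →
      G.IsRegularOn T r → G.IsRegularOn S r →
      T ∪ S ⊆ A ∧ G.IsRegularOn (T ∪ S) r ∧ (T ∪ S).ncard = T.ncard + S.ncard := by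
    intro r T S hT hS hTr hSr
    refine ⟨Set.union_subset (hT.trans (hTD.trans hDA)) (hS.trans Set.sdiff_subset),
      hTr.union hSr fun x hx y hy hxy => (hS hy).2 (hclosed x (hT hx) ⟨hxy, (hS hy).1⟩),
      Set.ncard_union_eq (Set.disjoint_of_subset (hT.trans hTD) hS Set.disjoint_sdiff_right)⟩
  obtain ⟨k₀, r₀, c₀⟩ := extend (by intro x; simp +contextual) hS₀ h₀ g₀
  obtain ⟨k₁, r₁, c₁⟩ := extend (by intro x; simp +contextual) hS₁ h₁ g₁
  obtain ⟨k₂, r₂, c₂⟩ := extend (by intro x; simp +contextual) hS₂ h₂ g₂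
  refine ⟨_, k₀, _, k₁, _, k₂, r₀, r₁, r₂, ?_⟩
  have := Set.ncard_sdiff_add_ncard_of_subset hDA
  omega

theorem RegularSetsBound.of_isolated {A : Set V} {v : V} (hv : v ∈ A)
    (hNv : G.neighborSet v ∩ A = ∅) (hsmaller : ∀ B ⊂ A, G.RegularSetsBound B) :
    G.RegularSetsBound A :=
  .of_sdiff (D := {v}) (T₀ := {v}) (T₁ := ∅) (T₂ := ∅) (by simpa) (by simp)
    (by simp only [Set.union_empty, Set.mem_singleton_iff, forall_eq, hNv, Set.empty_subset])
    (isRegularOn_singleton v) (isRegularOn_empty 1) (isRegularOn_empty 2) (by simp)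
    (hsmaller _ (Set.sdiff_ssubset_left_iff.mpr ⟨v, hv, rfl⟩))

theorem RegularSetsBound.of_isolated_edge {A : Set V} {u v : V} (hv : v ∈ A)
    (hNv : G.neighborSet v ∩ A = {u}) (hNu : G.neighborSet u ∩ A ⊆ {v})
    (hsmaller : ∀ B ⊂ A, G.RegularSetsBound B) : G.RegularSetsBound A := by
  have hu : u ∈ G.neighborSet v ∩ A := hNv ▸ rfl
  refine .of_sdiff (T₀ := {v}) (T₁ := {v, u}) (T₂ := ∅) (Set.pair_subset hv hu.2)
    (by simp [Set.insert_subset_iff]) ?_ (isRegularOn_singleton v) (isRegularOn_pair_of_adj hu.1)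
    (isRegularOn_empty 2) (by simp [Set.ncard_pair hu.1.ne])
    (hsmaller _ (Set.sdiff_ssubset_left_iff.mpr ⟨v, hv, by simp⟩))
  intro z hz
  simp only [Set.union_empty, Set.mem_union, Set.mem_insert_iff, Set.mem_singleton_iff] at hz
  rcases hz with rfl | rfl | rfl
  all_goals first | exact hNv.subset.trans (by simp) | exact hNu.trans (by simp)

theorem RegularSetsBound.of_path_end (hdeg : ∀ v, (G.neighborSet v).ncard ≤ 2) {A : Set V}
    {u v x : V} (hv : v ∈ A) (hNv : G.neighborSet v ∩ A = {u}) (hx : x ∈ G.neighborSet u ∩ A)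
    (hxv : x ≠ v) (hsmaller : ∀ B ⊂ A, G.RegularSetsBound B) : G.RegularSetsBound A := by
  have hu : u ∈ G.neighborSet v ∩ A := hNv ▸ rfl
  have hNu : G.neighborSet u ∩ A ⊆ {v, x} :=
    Set.subset_pair_of_ncard_le_two ((Set.ncard_inter_le_ncard_left _ _).trans (hdeg u))
      ⟨hu.1.symm, hv⟩ hx hxv.symm
  obtain ⟨y, hy, hNx⟩ := Set.exists_subset_pair_of_ncard_le_two
    ((Set.ncard_inter_le_ncard_left _ _).trans (hdeg x)) ⟨hx.1.symm, hu.2⟩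
  have hvx : ¬G.Adj v x := fun h => hx.1.ne' (hNv.subset ⟨h, hx.2⟩)
  have hDA : ({v, u, x, y} : Set V) ⊆ A := by simp [Set.insert_subset_iff, hv, hu.2, hx.2, hy.2]
  refine .of_sdiff (T₀ := {v, x}) (T₁ := {v, u}) (T₂ := ∅) hDA
    (by simp [Set.insert_subset_iff]) ?_ (isRegularOn_pair_of_not_adj hvx)
    (isRegularOn_pair_of_adj hu.1) (isRegularOn_empty 2) ?_
    (hsmaller _ (Set.sdiff_ssubset_left_iff.mpr ⟨v, hv, by simp⟩))
  · intro z hz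
    simp only [Set.union_empty, Set.mem_union, Set.mem_insert_iff, Set.mem_singleton_iff] at hz
    rcases hz with (rfl | rfl) | rfl | rfl
    all_goals first
      | exact hNv.subset.trans (by simp) | exact hNu.trans (by simp [Set.insert_subset_iff])
      | exact hNx.trans (by simp [Set.insert_subset_iff])
  · have := Set.ncard_insert_le v {u, x, y}
    have := Set.ncard_insert_le u {x, y}
    have := Set.ncard_insert_le x {y}
    rw [Set.ncard_singleton] at *
    rw [Set.ncard_pair hxv.symm, Set.ncard_pair hu.1.ne, Set.ncard_empty]
    omega

theorem RegularSetsBound.of_ncard_le_one (hdeg : ∀ v, (G.neighborSet v).ncard ≤ 2) {A : Set V}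
    {v : V} (hv : v ∈ A) (hend : (G.neighborSet v ∩ A).ncard ≤ 1)
    (hsmaller : ∀ B ⊂ A, G.RegularSetsBound B) : G.RegularSetsBound A := by
  rcases (Set.ncard_le_one_iff_eq).mp hend with hNv | ⟨u, hNv⟩
  · exact .of_isolated hv hNv hsmaller
  by_cases hNu : G.neighborSet u ∩ A ⊆ {v}
  · exact .of_isolated_edge hv hNv hNu hsmaller
  · obtain ⟨x, hx, hxv⟩ := Set.not_subset.mp hNu
    exact .of_path_end hdeg hv hNv hx hxv hsmaller

theorem RegularSetsBound.of_triangle (hdeg : ∀ v, (G.neighborSet v).ncard ≤ 2) {A : Set V}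
    {u v w : V} (hv : v ∈ A) (hu : u ∈ A) (hw : w ∈ A) (hvu : G.Adj v u) (huw : G.Adj u w)
    (hwv : G.Adj w v) (hsmaller : ∀ B ⊂ A, G.RegularSetsBound B) : G.RegularSetsBound A := by
  have hN : ∀ {a b c : V}, b ∈ A → c ∈ A → G.Adj a b → G.Adj a c → b ≠ c →
      G.neighborSet a ∩ A ⊆ {b, c} := fun hb hc hab hac hbc =>
    Set.subset_pair_of_ncard_le_two ((Set.ncard_inter_le_ncard_left _ _).trans (hdeg _))
      ⟨hab, hb⟩ ⟨hac, hc⟩ hbc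
  have hNv := hN hu hw hvu hwv.symm huw.ne
  have hNu := hN hv hw hvu.symm huw hwv.ne'
  have hNw := hN hv hu hwv huw.symm hvu.ne
  have hDA : ({v, u, w} : Set V) ⊆ A := by simp [Set.insert_subset_iff, hv, hu, hw]
  refine .of_sdiff (T₀ := {v}) (T₁ := {v, u}) (T₂ := {v, u, w}) hDA
    (by simp [Set.insert_subset_iff]) ?_ (isRegularOn_singleton v) (isRegularOn_pair_of_adj hvu)
    (isRegularOn_triangle hvu huw hwv) ?_
    (hsmaller _ (Set.sdiff_ssubset_left_iff.mpr ⟨v, hv, by simp⟩))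
  · intro z hz
    simp only [Set.mem_union, Set.mem_insert_iff, Set.mem_singleton_iff] at hz
    rcases hz with (rfl | rfl | rfl) | rfl | rfl | rfl
    all_goals first
      | exact hNv.trans (by simp [Set.insert_subset_iff])
      | exact hNu.trans (by simp [Set.insert_subset_iff])
      | exact hNw.trans (by simp [Set.insert_subset_iff])
  · rw [Set.ncard_singleton, Set.ncard_pair hvu.ne,
      Set.ncard_eq_three.mpr ⟨v, u, w, hvu.ne, hwv.ne', huw.ne, rfl⟩]

theorem RegularSetsBound.of_isRegularOn_two (hdeg : ∀ v, (G.neighborSet v).ncard ≤ 2)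
    {A : Set V} (hA : G.IsRegularOn A 2) {v : V} (hv : v ∈ A)
    (hsmaller : ∀ B ⊂ A, G.RegularSetsBound B) : G.RegularSetsBound A := by
  obtain ⟨u, w, huw, hNv⟩ := Set.ncard_eq_two.mp (hA v hv)
  have hu : u ∈ G.neighborSet v ∩ A := hNv ▸ by simp
  have hw : w ∈ G.neighborSet v ∩ A := hNv ▸ by simp
  obtain ⟨u', hu', hu'v⟩ := Set.exists_ne_of_one_lt_ncard (s := G.neighborSet u ∩ A)
    (by rw [hA u hu.2]; norm_num) v
  by_cases htri : u' = w
  · subst htri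
    exact .of_triangle hdeg hv hu.2 hw.2 hu.1 hu'.1 hw.1.symm hsmaller
  obtain ⟨S₀, hS₀, S₁, hS₁, S₂, hS₂, h₀, h₁, h₂, hcount⟩ :=
    hsmaller (A \ {v}) (Set.sdiff_ssubset_left_iff.mpr ⟨v, hv, rfl⟩)
  have hclosed : ∀ {x y : V}, G.Adj x y → x ∉ S₂ → y ∉ S₂ := fun hxy hx hy =>
    hx (h₂.neighborSet_subset hy (hdeg _) hxy.symm)
  have hv₂ : v ∉ S₂ := fun h => (hS₂ h).2 rfl
  have hball : Disjoint S₂ {v, u, w, u'} := by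
    simp only [Set.disjoint_insert_right, Set.disjoint_singleton_right]
    exact ⟨hv₂, hclosed hu.1 hv₂, hclosed hw.1 hv₂, hclosed hu'.1 (hclosed hu.1 hv₂)⟩
  have hball_card : ({v, u, w, u'} : Set V).ncard = 4 := Set.ncard_eq_four.mpr
    ⟨v, u, w, u', hu.1.ne, hw.1.ne, hu'v.symm, huw, hu'.1.ne, Ne.symm htri, rfl⟩
  have hS₂_card : S₂.ncard + 4 ≤ A.ncard := by
    rw [← hball_card, ← Set.ncard_union_eq hball]
    refine Set.ncard_le_ncard (Set.union_subset (hS₂.trans Set.sdiff_subset) ?_)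
    simp [Set.insert_subset_iff, hv, hu.2, hw.2, hu'.2]
  have := Set.ncard_sdiff_singleton_add_one hv
  -- This leaves `4|A| - 1 ≤ 8|S₀| + 2|S₁|`, and both sides of `4|A| ≤ 8|S₀| + 2|S₁|` are even.
  refine ⟨S₀, hS₀.trans Set.sdiff_subset, S₁, hS₁.trans Set.sdiff_subset, A, le_rfl, h₀, h₁, hA, ?_⟩
  omega

theorem regularSetsBound (hdeg : ∀ v, (G.neighborSet v).ncard ≤ 2) (A : Set V) :
    G.RegularSetsBound A := by
  induction A using WellFoundedLT.induction with
  | ind A hsmaller =>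
  rcases A.eq_empty_or_nonempty with rfl | ⟨v, hv⟩
  · exact regularSetsBound_empty
  by_cases hend : ∃ x ∈ A, (G.neighborSet x ∩ A).ncard ≤ 1
  · obtain ⟨x, hx, hx1⟩ := hend
    exact .of_ncard_le_one hdeg hx hx1 hsmaller
  · push Not at hend
    refine .of_isRegularOn_two hdeg (fun x hx => ?_) hv hsmaller
    exact le_antisymm ((Set.ncard_inter_le_ncard_left _ _).trans (hdeg x)) (hend x hx)

end Finite

end SimpleGraph

theorem stmt_11_general (k : ℕ) (V : Type) [Finite V] (G : SimpleGraph V)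
    (hdeg : ∀ v, ndeg G v ≤ 2) (hn : 11 * (k - 1) < 5 * Nat.card V) :
    ∃ s : Set V, k ≤ s.ncard ∧ IsRegularGraph (G.induce s) := by
  obtain ⟨S₀, -, S₁, -, S₂, -, h₀, h₁, h₂, hcount⟩ := G.regularSetsBound hdeg Set.univ
  rw [Set.ncard_univ] at hcount
  have hlarge : k ≤ S₀.ncard ∨ k ≤ S₁.ncard ∨ k ≤ S₂.ncard := by omega
  rcases hlarge with h | h | h
  exacts [⟨S₀, h, h₀.isRegularGraph_induce⟩, ⟨S₁, h, h₁.isRegularGraph_induce⟩,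
    ⟨S₂, h, h₂.isRegularGraph_induce⟩]

/-- Every graph with maximum degree at most `2` and more than `11(k-1)/5` vertices has a
regular induced subgraph with at least `k` vertices, i.e. `f(k,2) ≤ 11(k-1)/5`. -/
theorem stmt_11 (k : ℕ) (hk : 1 ≤ k) (V : Type) [Finite V] (G : SimpleGraph V)
    (hdeg : ∀ v, ndeg G v ≤ 2) (hn : 11 * (k - 1) < 5 * Nat.card V) :
    ∃ s : Set V, k ≤ s.ncard ∧ IsRegularGraph (G.induce s) :=
  stmt_11_general k V G hdeg hn
end

section
/- For every integer r ≥ 3, the cycle graph C_r on r vertices satisfies α(C_r) + 2·im(C_r) ≥ 4r/5, i.e., 5·(α(C_r) + 2·im(C_r)) ≥ 4r, where α denotes the independence number and im denotes the maximum number of edges in an induced matching. The worst case (equality) occurs for r = 5. -/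
/-- The independence number: the maximum size of a set of pairwise non-adjacent vertices. -/
noncomputable def indepNum {V : Type*} (G : SimpleGraph V) : ℕ :=
  sSup {m | ∃ s : Set V, s.ncard = m ∧ s.Pairwise fun u v => ¬ G.Adj u v}

/-- The induced matching number: the maximum number of edges in an induced matching, i.e. the
maximum `m` such that some set of `2m` vertices induces a `1`-regular subgraph. -/
noncomputable def indMatchNum {V : Type*} (G : SimpleGraph V) : ℕ :=
  sSup {m | ∃ s : Set V, s.ncard = 2 * m ∧ ∀ v, ndeg (G.induce s) v = 1}

lemma cyc_adj_iff {r : ℕ} (hr : 2 ≤ r) {u v : Fin r} :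
    (SimpleGraph.cycleGraph r).Adj u v ↔
      (u.val + 1 = v.val ∨ v.val + 1 = u.val ∨
        (u.val = 0 ∧ v.val + 1 = r) ∨ (v.val = 0 ∧ u.val + 1 = r)) := by
  rw [SimpleGraph.cycleGraph_adj']
  have hu := u.isLt; have hv := v.isLt
  rw [Fin.sub_def, Fin.sub_def]
  have key : ∀ a b : ℕ, a < r → b < r →
      ((r - b + a) % r = 1 ↔ (b + 1 = a ∨ (a = 0 ∧ b + 1 = r))) := by
    intro a b ha hb
    rcases Nat.lt_or_ge (r - b + a) r with h | h
    · rw [Nat.mod_eq_of_lt h]; omega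
    · rw [Nat.mod_eq_sub_mod h, Nat.mod_eq_of_lt (by omega)]; omega
  rw [key _ _ hu hv, key _ _ hv hu]
  tauto

lemma ncard_fin_le {r : ℕ} (s : Set (Fin r)) : s.ncard ≤ r := by
  calc s.ncard ≤ (Set.univ : Set (Fin r)).ncard :=
        Set.ncard_le_ncard (Set.subset_univ s) Set.finite_univ
    _ = r := by rw [Set.ncard_univ]; simp

lemma bddAbove_aux {r : ℕ} (P : ℕ → Set (Fin r) → Prop) :
    BddAbove {m | ∃ s : Set (Fin r), s.ncard = m ∧ P m s} := by
  refine ⟨r, fun m hm => ?_⟩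
  obtain ⟨s, hs, -⟩ := hm
  have := ncard_fin_le s
  omega

lemma bddAbove_aux2 {r : ℕ} (P : Set (Fin r) → Prop) :
    BddAbove {m | ∃ s : Set (Fin r), s.ncard = 2 * m ∧ P s} := by
  refine ⟨r, fun m hm => ?_⟩
  obtain ⟨s, hs, -⟩ := hm
  have := ncard_fin_le s
  omega

lemma range_ncard {α : Type*} {r : ℕ} (f : Fin r → α) (hf : Function.Injective f) :
    (Set.range f).ncard = r := by
  rw [← Nat.card_coe_set_eq, Nat.card_range_of_injective hf, Nat.card_eq_fintype_card,
    Fintype.card_fin]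

lemma indep_lower {r : ℕ} (hr : 3 ≤ r) : r / 2 ≤ indepNum (SimpleGraph.cycleGraph r) := by
  have hlt : ∀ k : Fin (r / 2), 2 * k.val < r := fun k => by have := k.isLt; omega
  set f : Fin (r / 2) → Fin r := fun k => ⟨2 * k.val, hlt k⟩ with hfdef
  have hinj : Function.Injective f := by
    intro a b hab
    have : 2 * a.val = 2 * b.val := congrArg Fin.val hab
    exact Fin.ext (by omega)
  apply le_csSup (bddAbove_aux _)
  refine ⟨Set.range f, range_ncard f hinj, ?_⟩
  rintro u ⟨a, rfl⟩ v ⟨b, rfl⟩ hne hadj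
  rw [cyc_adj_iff (by omega)] at hadj
  have ha := a.isLt; have hb := b.isLt
  have hne' : a.val ≠ b.val := fun h => hne (congrArg f (Fin.ext h))
  simp only [hfdef] at hadj
  omega

lemma match_lower {r : ℕ} (hr : 3 ≤ r) : r / 3 ≤ indMatchNum (SimpleGraph.cycleGraph r) := by
  have hlt : ∀ k : Fin (2 * (r / 3)), 3 * (k.val / 2) + k.val % 2 < r := fun k => by
    have := k.isLt; omega
  set g : Fin (2 * (r / 3)) → Fin r := fun k => ⟨3 * (k.val / 2) + k.val % 2, hlt k⟩ with hg
  have hinj : Function.Injective g := by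
    intro a b hab
    have h := congrArg Fin.val hab
    simp only [hg] at h
    exact Fin.ext (by omega)
  unfold indMatchNum
  apply le_csSup (bddAbove_aux2 _)
  refine ⟨Set.range g, ?_, ?_⟩
  · rw [range_ncard g hinj]
  intro v
  obtain ⟨k, hk⟩ := v.2
  have hk2 := k.isLt
  have hjlt : 2 * (k.val / 2) + (1 - k.val % 2) < 2 * (r / 3) := by omega
  set j : Fin (2 * (r / 3)) := ⟨2 * (k.val / 2) + (1 - k.val % 2), hjlt⟩ with hj
  have hset : ((SimpleGraph.cycleGraph r).induce (Set.range g)).neighborSet v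
      = {⟨g j, Set.mem_range_self j⟩} := by
    ext u
    obtain ⟨i, hi⟩ := u.2
    have hi2 := i.isLt
    simp only [SimpleGraph.mem_neighborSet, Set.mem_singleton_iff]
    have hadj : ((SimpleGraph.cycleGraph r).induce (Set.range g)).Adj v u ↔
        (SimpleGraph.cycleGraph r).Adj ↑v ↑u := Iff.rfl
    rw [hadj, cyc_adj_iff (by omega), ← hk, ← hi]
    simp only [hg]
    constructor
    · intro h
      have hij : i = j := Fin.ext (by simp only [hj]; omega)
      exact Subtype.ext (by rw [← hi, hij])
    · intro h
      have : (g i : Fin r) = g j := by rw [hi]; exact congrArg Subtype.val h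
      have hij : i = j := hinj this
      subst hij
      simp only [hj]
      omega
  rw [ndeg, hset, Set.ncard_singleton]

lemma indep5 : indepNum (SimpleGraph.cycleGraph 5) ≤ 2 := by
  unfold indepNum
  have h0 : 0 ∈ {m | ∃ s : Set (Fin 5), s.ncard = m ∧
      s.Pairwise fun u v => ¬(SimpleGraph.cycleGraph 5).Adj u v} :=
    ⟨∅, by simp, Set.pairwise_empty _⟩
  apply csSup_le ⟨0, h0⟩
  rintro m ⟨s, hm, hp⟩
  have key : ∀ t : Finset (Fin 5),
      (∀ a ∈ t, ∀ b ∈ t, a ≠ b → ¬(SimpleGraph.cycleGraph 5).Adj a b) → t.card ≤ 2 := by decide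
  have hfin := s.toFinite
  have := key hfin.toFinset (fun a ha b hb hne =>
    hp (hfin.mem_toFinset.mp ha) (hfin.mem_toFinset.mp hb) hne)
  rwa [← Set.ncard_eq_toFinset_card s hfin, hm] at this

lemma match5 : indMatchNum (SimpleGraph.cycleGraph 5) ≤ 1 := by
  unfold indMatchNum
  have h0 : 0 ∈ {m | ∃ s : Set (Fin 5), s.ncard = 2 * m ∧
      ∀ v, ndeg ((SimpleGraph.cycleGraph 5).induce s) v = 1} :=
    ⟨∅, by simp, fun v => absurd v.2 (Set.notMem_empty _)⟩
  apply csSup_le ⟨0, h0⟩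
  clear h0
  rintro m ⟨s, hm, hdeg⟩
  by_contra hcon
  push_neg at hcon
  have hcard : 4 ≤ s.ncard := by omega
  have hcompl := Set.ncard_add_ncard_compl s
  rw [Nat.card_eq_fintype_card, Fintype.card_fin] at hcompl
  have hc1 : sᶜ.ncard ≤ 1 := by omega
  obtain ⟨j, hj⟩ : ∃ j : Fin 5, ∀ i : Fin 5, i ≠ j → i ∈ s := by
    interval_cases h : sᶜ.ncard
    · have : sᶜ = ∅ := (Set.ncard_eq_zero (Set.toFinite _)).mp h
      exact ⟨0, fun i _ => by
        by_contra hi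
        exact absurd (this ▸ hi : i ∈ (∅ : Set (Fin 5))) (Set.notMem_empty _)⟩
    · obtain ⟨a, ha⟩ := Set.ncard_eq_one.mp h
      refine ⟨a, fun i hi => ?_⟩
      by_contra his
      have hmem : i ∈ sᶜ := his
      rw [ha] at hmem
      exact hi hmem
  have hne2 : ∀ j : Fin 5, j + 2 ≠ j := by decide
  have hne1 : ∀ j : Fin 5, j + 1 ≠ j := by decide
  have hne3 : ∀ j : Fin 5, j + 3 ≠ j := by decide
  have hadj1 : ∀ j : Fin 5, (SimpleGraph.cycleGraph 5).Adj (j + 2) (j + 1) := by decide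
  have hadj2 : ∀ j : Fin 5, (SimpleGraph.cycleGraph 5).Adj (j + 2) (j + 3) := by decide
  have hne13 : ∀ j : Fin 5, j + 1 ≠ j + 3 := by decide
  have h1 : j + 2 ∈ s := hj _ (hne2 j)
  have h2 : j + 1 ∈ s := hj _ (hne1 j)
  have h3 : j + 3 ∈ s := hj _ (hne3 j)
  have hv := hdeg ⟨j + 2, h1⟩
  have hlt : 1 < ndeg ((SimpleGraph.cycleGraph 5).induce s) ⟨j + 2, h1⟩ := by
    rw [ndeg, Set.one_lt_ncard (Set.toFinite _)]
    refine ⟨⟨j + 1, h2⟩, ?_, ⟨j + 3, h3⟩, ?_, ?_⟩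
    · exact hadj1 j
    · exact hadj2 j
    · intro h
      exact hne13 j (congrArg Subtype.val h)
  omega

/-- For every cycle `C_r` with `r ≥ 3` one has `α(C_r) + 2·im(C_r) ≥ 4r/5`, with equality
(the worst case) for `r = 5`. -/
theorem stmt_14 :
    (∀ r : ℕ, 3 ≤ r →
      4 * r ≤ 5 * (indepNum (SimpleGraph.cycleGraph r) +
        2 * indMatchNum (SimpleGraph.cycleGraph r))) ∧
    5 * (indepNum (SimpleGraph.cycleGraph 5) +
        2 * indMatchNum (SimpleGraph.cycleGraph 5)) = 4 * 5 := by
  have main : ∀ r : ℕ, 3 ≤ r →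
      4 * r ≤ 5 * (indepNum (SimpleGraph.cycleGraph r) +
        2 * indMatchNum (SimpleGraph.cycleGraph r)) := by
    intro r hr
    have h1 := indep_lower hr
    have h2 := match_lower hr
    omega
  refine ⟨main, ?_⟩
  have h5 := main 5 (by norm_num)
  have ha := indep5
  have hb := match5
  omega
end
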